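/- arXiv:2206.12421 — 4 statements merged into one kernel-verified Lean document; each statement's English description precedes it below -/
import Mathlib

section
/- Let N and k be integers with 0 ≤ k < N. The number of indices i with 0 ≤ i ≤ N-1 at which a descent occurs in the Euclidean array E(k,N), i.e. the cardinality of {i : 0 ≤ i ≤ N-1 and (k·(i-1)) mod N > (k·i) mod N}, equals k. -/
set_option linter.unnecessarySeqFocus false

/-- Telescoping sum over `Finset.Icc 0 (N-1)` in the integers. -/
lemma tele_sum (f : ℤ → ℤ) (N : ℤ) (hN : 0 < N) :
    ∑ i ∈ Finset.Icc (0:ℤ) (N - 1), (f i - f (i - 1)) = f (N - 1) - f (-1) := by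
  have him : Finset.Icc (0:ℤ) (N - 1) = (Finset.range N.toNat).image (Nat.cast) := by
    ext x
    simp only [Finset.mem_Icc, Finset.mem_image, Finset.mem_range]
    constructor
    · rintro ⟨h1, h2⟩
      exact ⟨x.toNat, by omega, by omega⟩
    · rintro ⟨j, hj, rfl⟩
      omega
  rw [him, Finset.sum_image (by intro x _ y _ h; exact_mod_cast h)]
  have key := Finset.sum_range_sub (fun j : ℕ => f ((j : ℤ) - 1)) N.toNat
  push_cast at key
  simp only [add_sub_cancel_right] at key
  rw [key]
  congr 1 <;> congr 1 <;> omega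

/-- One step of the residue row: the difference of consecutive residues is `k`,
minus `N` exactly at descents. -/
lemma pointwise (N k : ℤ) (hk : 0 ≤ k) (hkN : k < N) (i : ℤ) :
    (k * i) % N - (k * (i - 1)) % N =
      k - (if (k * (i - 1)) % N > (k * i) % N then N else 0) := by
  have hN : 0 < N := lt_of_le_of_lt hk hkN
  set a := (k * (i - 1)) % N with ha
  set b := (k * i) % N with hb
  have ha0 : 0 ≤ a := Int.emod_nonneg _ (by omega)
  have haN : a < N := Int.emod_lt_of_pos _ hN
  have hb0 : 0 ≤ b := Int.emod_nonneg _ (by omega)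
  have hbN : b < N := Int.emod_lt_of_pos _ hN
  have hmod : (k * i - k * (i - 1)) % N = (b - a) % N := Int.sub_emod _ _ _
  have hki : k * i - k * (i - 1) = k := by ring
  have hkk : k % N = k := Int.emod_eq_of_lt hk hkN
  rw [hki, hkk] at hmod
  have hdiv : b - a - k = N * ((b - a) / N) := by
    have := Int.emod_add_mul_ediv (b - a) N
    omega
  set q := (b - a) / N with hq
  have hq1 : q < 1 := by
    have h1 : N * q < N * 1 := by omega
    exact lt_of_mul_lt_mul_left h1 (le_of_lt hN)
  have hq2 : -2 < q := by
    have h1 : N * (-2) < N * q := by omega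
    exact lt_of_mul_lt_mul_left h1 (le_of_lt hN)
  interval_cases q <;> split <;> omega

/-- The number of positions `0 ≤ i ≤ N-1` at which a descent occurs on the residue row of
the Euclidean array `E(k,N)`, i.e. `(k*(i-1)) % N > (k*i) % N`, equals `k`:
the Euclidean rhythm contains exactly `k` notes. -/
theorem euclidean_rhythm_note_count (N k : ℤ) (hk : 0 ≤ k) (hkN : k < N) :
    (((Finset.Icc (0 : ℤ) (N - 1)).filter
        (fun i => (k * (i - 1)) % N > (k * i) % N)).card : ℤ) = k := by
  have hN : 0 < N := lt_of_le_of_lt hk hkN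
  have htele : ∑ i ∈ Finset.Icc (0:ℤ) (N - 1), ((k * i) % N - (k * (i - 1)) % N)
      = (k * (N - 1)) % N - (k * (-1)) % N :=
    tele_sum (fun i => (k * i) % N) N hN
  have hends : (k * (N - 1)) % N = (k * (-1)) % N := by
    have h : k * (N - 1) = k * (-1) + N * k := by ring
    rw [h, Int.add_mul_emod_self_left]
  rw [hends, sub_self] at htele
  have hsum : ∑ i ∈ Finset.Icc (0:ℤ) (N - 1), ((k * i) % N - (k * (i - 1)) % N)
      = ∑ i ∈ Finset.Icc (0:ℤ) (N - 1),
          (k - (if (k * (i - 1)) % N > (k * i) % N then N else 0)) :=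
    Finset.sum_congr rfl (fun i _ => pointwise N k hk hkN i)
  rw [hsum, Finset.sum_sub_distrib, Finset.sum_const] at htele
  have hcard : (Finset.Icc (0:ℤ) (N - 1)).card = N.toNat := by
    rw [Int.card_Icc]; congr 1; omega
  have hite : ∑ i ∈ Finset.Icc (0:ℤ) (N - 1),
      (if (k * (i - 1)) % N > (k * i) % N then N else 0)
      = (((Finset.Icc (0 : ℤ) (N - 1)).filter
        (fun i => (k * (i - 1)) % N > (k * i) % N)).card : ℤ) * N := by
    rw [Finset.sum_ite, Finset.sum_const, Finset.sum_const]
    simp [nsmul_eq_mul]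
  rw [hcard, hite, nsmul_eq_mul] at htele
  have hNt : (N.toNat : ℤ) = N := by omega
  rw [hNt] at htele
  set C : ℤ := (((Finset.Icc (0 : ℤ) (N - 1)).filter
      (fun i => (k * (i - 1)) % N > (k * i) % N)).card : ℤ) with hC
  have hCN : C * N = k * N := by linarith
  exact mul_right_cancel₀ (by omega) hCN
end

section
/- Let N and k be integers with 0 < k < N. The number of indices i with 0 ≤ i ≤ N-1 at which an ascent occurs in the Euclidean array E(k,N), i.e. the cardinality of {i : 0 ≤ i ≤ N-1 and (k·(i-1)) mod N < (k·i) mod N}, equals N - k. -/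
/-- The number of positions `0 ≤ i ≤ N-1` at which an ascent occurs on the residue row of
the Euclidean array `E(k,N)`, i.e. `(k*(i-1)) % N < (k*i) % N`, equals `N - k`. -/
theorem euclidean_rhythm_rest_count (N k : ℤ) (hk : 0 < k) (hkN : k < N) :
    (((Finset.Icc (0 : ℤ) (N - 1)).filter
        (fun i => (k * (i - 1)) % N < (k * i) % N)).card : ℤ) = N - k := by
  have hN : 0 < N := hk.trans hkN
  set f : ℤ → ℤ := fun i => (k * i) % N with hf
  -- dichotomy for consecutive differences
  have hdich : ∀ i : ℤ, f i - f (i - 1) = k ∨ f i - f (i - 1) = k - N := by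
    intro i
    have h1 : 0 ≤ f i := Int.emod_nonneg _ (by omega)
    have h2 : f i < N := Int.emod_lt_of_pos _ hN
    have h3 : 0 ≤ f (i - 1) := Int.emod_nonneg _ (by omega)
    have h4 : f (i - 1) < N := Int.emod_lt_of_pos _ hN
    have e1 : f i ≡ k * i [ZMOD N] := Int.emod_emod_of_dvd _ dvd_rfl
    have e2 : f (i - 1) ≡ k * (i - 1) [ZMOD N] := Int.emod_emod_of_dvd _ dvd_rfl
    have e3 : f i - f (i - 1) ≡ k [ZMOD N] := by
      have := e1.sub e2
      have hr : k * i - k * (i - 1) = k := by ring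
      rwa [hr] at this
    obtain ⟨c, hc⟩ := e3.dvd
    have hc0 : c = 0 ∨ c = 1 := by
      by_contra h
      push_neg at h
      have : 2 ≤ c ∨ c ≤ -1 := by omega
      rcases this with h' | h'
      · nlinarith
      · nlinarith
    rcases hc0 with rfl | rfl
    · left; omega
    · right; omega
  have hasc : ∀ i : ℤ, (f (i - 1) < f i) ↔ f i - f (i - 1) = k := by
    intro i
    rcases hdich i with h | h <;> constructor <;> intro h' <;> omega
  set n : ℕ := N.toNat with hn
  have hnN : (n : ℤ) = N := Int.toNat_of_nonneg (by omega)
  -- card transfer from Icc in ℤ to range in ℕ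
  have hcard : ((Finset.Icc (0 : ℤ) (N - 1)).filter
        (fun i => (k * (i - 1)) % N < (k * i) % N)).card
      = ((Finset.range n).filter (fun j : ℕ => f ((j : ℤ) - 1) < f (j : ℤ))).card := by
    refine Finset.card_bij' (fun i _ => i.toNat) (fun j _ => (j : ℤ)) ?_ ?_ ?_ ?_
    · intro i hi
      simp only [Finset.mem_filter, Finset.mem_Icc] at hi
      simp only [Finset.mem_filter, Finset.mem_range]
      constructor
      · omega
      · have hcast : ((i.toNat : ℤ)) = i := Int.toNat_of_nonneg hi.1.1
        rw [hcast]
        exact hi.2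
    · intro j hj
      simp only [Finset.mem_filter, Finset.mem_range] at hj
      simp only [Finset.mem_filter, Finset.mem_Icc]
      refine ⟨⟨by positivity, by omega⟩, hj.2⟩
    · intro i hi
      simp only [Finset.mem_filter, Finset.mem_Icc] at hi
      exact Int.toNat_of_nonneg hi.1.1
    · intro j hj
      simp
  -- telescoping sum
  set g : ℕ → ℤ := fun j => f ((j : ℤ) - 1) with hg
  have htel : ∑ j ∈ Finset.range n, (g (j + 1) - g j) = g n - g 0 :=
    Finset.sum_range_sub g n
  have hterm : ∀ j : ℕ, g (j + 1) - g j = f (j : ℤ) - f ((j : ℤ) - 1) := by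
    intro j
    simp only [hg]
    push_cast
    ring_nf
  have hends : g n - g 0 = 0 := by
    have h1 : g n = (-k) % N := by
      simp only [hg, hf, hnN]
      rw [show k * (N - 1) = -k + N * k by ring, Int.add_mul_emod_self_left]
    have h2 : g 0 = (-k) % N := by
      simp only [hg, hf]
      rw [show ((0 : ℕ) : ℤ) - 1 = -1 by norm_num, show k * (-1 : ℤ) = -k by ring]
    rw [h1, h2, sub_self]
  have hsum : ∑ j ∈ Finset.range n, (f (j : ℤ) - f ((j : ℤ) - 1)) = 0 := by
    rw [← hends, ← htel]
    exact Finset.sum_congr rfl fun j _ => (hterm j).symm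
  -- split sum by ascent
  have hsplit := Finset.sum_filter_add_sum_filter_not (Finset.range n)
      (fun j : ℕ => f ((j : ℤ) - 1) < f (j : ℤ))
      (fun j => f (j : ℤ) - f ((j : ℤ) - 1))
  have hA : ∑ j ∈ (Finset.range n).filter (fun j : ℕ => f ((j : ℤ) - 1) < f (j : ℤ)),
        (f (j : ℤ) - f ((j : ℤ) - 1))
      = ((Finset.range n).filter (fun j : ℕ => f ((j : ℤ) - 1) < f (j : ℤ))).card * k := by
    rw [Finset.sum_congr rfl (fun j hj => ?_), Finset.sum_const, nsmul_eq_mul]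
    exact (hasc (j : ℤ)).mp (Finset.mem_filter.mp hj).2
  have hB : ∑ j ∈ (Finset.range n).filter (fun j : ℕ => ¬ (f ((j : ℤ) - 1) < f (j : ℤ))),
        (f (j : ℤ) - f ((j : ℤ) - 1))
      = ((Finset.range n).filter (fun j : ℕ => ¬ (f ((j : ℤ) - 1) < f (j : ℤ)))).card * (k - N) := by
    rw [Finset.sum_congr rfl (fun j hj => ?_), Finset.sum_const, nsmul_eq_mul]
    have hq := (Finset.mem_filter.mp hj).2
    rcases hdich (j : ℤ) with h | h
    · exact absurd ((hasc (j : ℤ)).mpr h) hq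
    · exact h
  have hcards : ((Finset.range n).filter (fun j : ℕ => f ((j : ℤ) - 1) < f (j : ℤ))).card
      + ((Finset.range n).filter (fun j : ℕ => ¬ (f ((j : ℤ) - 1) < f (j : ℤ)))).card = n := by
    simpa using Finset.card_filter_add_card_filter_not
      (s := Finset.range n) (fun j : ℕ => f ((j : ℤ) - 1) < f (j : ℤ))
  rw [hA, hB] at hsplit
  rw [← hsplit] at hsum
  rw [hcard]
  set a : ℕ := ((Finset.range n).filter (fun j : ℕ => f ((j : ℤ) - 1) < f (j : ℤ))).card with ha
  set b : ℕ := ((Finset.range n).filter (fun j : ℕ => ¬ (f ((j : ℤ) - 1) < f (j : ℤ)))).card with hb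
  have hab : (a : ℤ) + b = N := by
    rw [← hnN]; exact_mod_cast hcards
  have hbb : (b : ℤ) = N - a := by omega
  rw [hbb] at hsum
  have hzero : N * ((a : ℤ) - (N - k)) = 0 := by linear_combination hsum
  rcases mul_eq_zero.mp hzero with h | h
  · omega
  · omega
end

section
/- Let N and k be integers with 0 < k < N, and let d = gcd(k, N). Then N/d is the minimal positive period of the descent indicator function D : ℤ → Prop, D(i) := ((k·(i-1)) mod N > (k·i) mod N); that is, N/d is the least element of the set of positive integers p such that for all integers i, D(i + p) ↔ D(i). -/
/-! A descent at `i` means that the residue `k * i % N` wrapped around past `N`, i.e.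
`k * i % N < k`, so every shift `p` with `N ∣ k * p` is a period. Conversely, Bézout gives `a`
with `k * a ≡ d [ZMOD N]`; as all residues are multiples of `d`, the positions `i` carrying a note
while `i - a` carries none are exactly those with `N ∣ k * i`. A period preserves this set, which
contains `0`, so it contains the period `p` itself: `N ∣ k * p`, i.e. `N / d ∣ p`. -/

theorem Int.dvd_mul_iff_ediv_gcd_dvd {N : ℤ} (k : ℤ) (hN : 0 < N) (p : ℤ) :
    N ∣ k * p ↔ N / (Int.gcd k N : ℤ) ∣ p := by
  constructor
  · intro h
    have hp : k * p ≡ k * 0 [ZMOD N] := by rwa [mul_zero, Int.modEq_zero_iff_dvd]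
    rw [Int.gcd_comm]
    exact Int.modEq_zero_iff_dvd.1 (Int.ModEq.cancel_left_div_gcd hN hp)
  · rintro ⟨c, rfl⟩
    rw [← mul_assoc, ← Int.mul_ediv_assoc _ (Int.gcd_dvd_right k N),
      Int.mul_ediv_assoc' _ (Int.gcd_dvd_left k N)]
    exact (dvd_mul_left N _).mul_right c

namespace EuclideanRhythm

variable {N k : ℤ}

def IsNote (N k i : ℤ) : Prop := k * i % N < k

theorem descent_iff_isNote (hk : 0 ≤ k) (hkN : k < N) (i : ℤ) :
    k * (i - 1) % N > k * i % N ↔ IsNote N k i := by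
  have hN : 0 < N := hk.trans_lt hkN
  set r := k * (i - 1) % N
  have hr : 0 ≤ r ∧ r < N := ⟨Int.emod_nonneg _ hN.ne', Int.emod_lt_of_pos _ hN⟩
  have hstep : k * i % N = (r + k) % N := by
    rw [Int.emod_add_emod]; ring_nf
  unfold IsNote
  rcases lt_or_ge (r + k) N with h | h
  · rw [hstep, Int.emod_eq_of_lt (by omega) h]; omega
  · rw [hstep, ← Int.sub_emod_right, Int.emod_eq_of_lt (by omega) (by omega)]; omega

theorem isNote_and_not_isNote_sub_gcdA_iff (hk : 0 < k) (hkN : k < N) (i : ℤ) :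
    IsNote N k i ∧ ¬ IsNote N k (i - Int.gcdA k N) ↔ N ∣ k * i := by
  have hN : 0 < N := hk.trans hkN
  set g : ℤ := (Int.gcd k N : ℤ)
  set r := k * i % N
  have hr : 0 ≤ r ∧ r < N := ⟨Int.emod_nonneg _ hN.ne', Int.emod_lt_of_pos _ hN⟩
  have hgk : g ∣ k := Int.gcd_dvd_left k N
  have hgN : g ∣ N := Int.gcd_dvd_right k N
  have hgr : g ∣ r := by
    rw [show r = k * i - N * (k * i / N) from Int.emod_def _ _]
    exact dvd_sub (hgk.mul_right i) (hgN.mul_right _)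
  have hg : 0 < g := Int.natCast_pos.2 (Int.gcd_pos_of_ne_zero_left N hk.ne')
  have hgN' : g ≤ N - k := Int.le_of_dvd (by omega) (dvd_sub hgN hgk)
  -- Bézout: stepping back by `gcdA k N` lowers the residue by `g`
  have hback : k * (i - Int.gcdA k N) % N = (r - g) % N := by
    have hbez := Int.gcd_eq_gcd_ab k N
    have hdiv := Int.emod_add_mul_ediv (k * i) N
    rw [show k * (i - Int.gcdA k N) = r - g + N * (Int.gcdB k N + k * i / N) by
      linear_combination hbez - hdiv, Int.add_mul_emod_self_left]
  unfold IsNote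
  rw [hback, Int.dvd_iff_emod_eq_zero]
  constructor
  · rintro ⟨hrk, hprev⟩
    by_contra hr0
    have hgr' : g ≤ r := Int.le_of_dvd (by omega) hgr
    rw [Int.emod_eq_of_lt (by omega) (by omega)] at hprev
    omega
  · intro hr0
    rw [hr0, ← Int.add_mul_emod_self_left _ N 1, Int.emod_eq_of_lt (by omega) (by omega)]
    omega

theorem isNote_periodic_iff (hk : 0 < k) (hkN : k < N) (p : ℤ) :
    (∀ i, IsNote N k (i + p) ↔ IsNote N k i) ↔ N ∣ k * p := by
  constructor
  · intro h
    obtain ⟨h0, h1⟩ := (isNote_and_not_isNote_sub_gcdA_iff hk hkN 0).2 (by simp)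
    rw [← isNote_and_not_isNote_sub_gcdA_iff hk hkN]
    refine ⟨by simpa using (h 0).2 h0, fun hp => h1 ?_⟩
    rw [← h]; convert hp using 2; ring
  · rintro ⟨c, hc⟩ i
    unfold IsNote
    rw [mul_add, hc, Int.add_mul_emod_self_left]

end EuclideanRhythm

/-- `N / gcd(k,N)` is the least positive period of the descent indicator of the Euclidean
array `E(k,N)`. -/
theorem euclidean_rhythm_minimal_period (N k : ℤ) (hk : 0 < k) (hkN : k < N)
    (d : ℤ) (hd : d = Int.gcd k N) :
    IsLeast {p : ℤ | 0 < p ∧ ∀ i : ℤ,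
        ((k * (i + p - 1)) % N > (k * (i + p)) % N) ↔ ((k * (i - 1)) % N > (k * i) % N)}
      (N / d) := by
  have hN : 0 < N := hk.trans hkN
  have hperiod : ∀ p, (∀ i : ℤ, (k * (i + p - 1)) % N > (k * (i + p)) % N ↔
      (k * (i - 1)) % N > (k * i) % N) ↔ N / d ∣ p := fun p => by
    simp only [EuclideanRhythm.descent_iff_isNote hk.le hkN,
      EuclideanRhythm.isNote_periodic_iff hk hkN, Int.dvd_mul_iff_ediv_gcd_dvd k hN, hd]
  have hd_pos : 0 < N / d :=
    Int.ediv_pos_of_pos_of_dvd hN (by omega) (hd ▸ Int.gcd_dvd_right k N)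
  exact ⟨⟨hd_pos, (hperiod _).2 dvd_rfl⟩,
    fun p ⟨hp, hper⟩ => Int.le_of_dvd hp ((hperiod p).1 hper)⟩
end

section
/- Let N and k be integers with 0 < k < N. There exists an integer r such that for every integer i, an ascent occurs at position i in the Euclidean array E(k,N) (i.e. (k·(i-1)) mod N < (k·i) mod N) if and only if a descent occurs at position i + r in the Euclidean array E(N-k, N) (i.e. ((N-k)·(i+r-1)) mod N > ((N-k)·(i+r)) mod N). -/
/-!
For `0 < k < N`, stepping from `k (i - 1) mod N` to `k i mod N` adds `k` and wraps around at
most once, so `E(k, N)` has an ascent at `i` iff `k ≤ k i mod N`, and a descent iff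
`k i mod N < k`. Let `g = gcd(k, N)` and pick a Bézout coefficient `r` with `k r ≡ g (mod N)`.
With `b = k i mod N`, the residue of `(N - k)(i + r) ≡ -(k i + g)` is `N - (b + g)`, because
`b` is a multiple of `g` below `N`. So `E(N - k, N)` has a descent at `i + r` iff
`N - (b + g) < N - k`, i.e. `k < b + g`, which for the multiples `b` and `k` of `g` means
`k ≤ b`: an ascent of `E(k, N)` at `i`.
-/

namespace EuclideanRhythm

lemma add_emod_eq_or {k N : ℤ} (hk : 0 ≤ k) (hkN : k < N) (a : ℤ) :
    (a + k) % N = a % N + k ∨ (a + k) % N = a % N + k - N := by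
  have := Int.emod_nonneg a (by omega : N ≠ 0)
  have := Int.emod_lt_of_pos a (by omega : 0 < N)
  rw [Int.add_emod, Int.emod_eq_of_lt hk hkN]
  by_cases h : a % N + k < N
  · exact .inl (Int.emod_eq_of_lt (by omega) h)
  · refine .inr ?_
    rw [← Int.sub_emod_right, Int.emod_eq_of_lt (by omega) (by omega)]

lemma mul_emod_step {k N : ℤ} (hk : 0 < k) (hkN : k < N) (i : ℤ) :
    (k * i) % N = (k * (i - 1)) % N + k ∨ (k * i) % N = (k * (i - 1)) % N + k - N := by
  simpa only [sub_add_cancel, mul_sub_one] using add_emod_eq_or hk.le hkN (k * (i - 1))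

lemma ascent_iff {k N : ℤ} (hk : 0 < k) (hkN : k < N) (i : ℤ) :
    (k * (i - 1)) % N < (k * i) % N ↔ k ≤ (k * i) % N := by
  have := Int.emod_nonneg (k * (i - 1)) (by omega : N ≠ 0)
  have := Int.emod_lt_of_pos (k * (i - 1)) (by omega : 0 < N)
  have := mul_emod_step hk hkN i
  omega

lemma descent_iff {k N : ℤ} (hk : 0 < k) (hkN : k < N) (i : ℤ) :
    (k * i) % N < (k * (i - 1)) % N ↔ (k * i) % N < k := by
  have := Int.emod_nonneg (k * (i - 1)) (by omega : N ≠ 0)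
  have := Int.emod_lt_of_pos (k * (i - 1)) (by omega : 0 < N)
  have := mul_emod_step hk hkN i
  omega

lemma lt_add_iff_le_of_dvd {d k b : ℤ} (hd : 0 < d) (hdk : d ∣ k) (hdb : d ∣ b) :
    k < b + d ↔ k ≤ b := by
  obtain ⟨v, rfl⟩ := hdk
  obtain ⟨u, rfl⟩ := hdb
  rw [← mul_add_one, mul_lt_mul_iff_right₀ hd, mul_le_mul_iff_right₀ hd, Int.lt_add_one_iff]

lemma gcd_dvd_mul_emod (k N i : ℤ) : (Int.gcd k N : ℤ) ∣ (k * i) % N := by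
  rw [Int.emod_def]
  exact dvd_sub ((Int.gcd_dvd_left k N).mul_right i) ((Int.gcd_dvd_right k N).mul_right _)

lemma mul_emod_add_gcd_le {N : ℤ} (hN : 0 < N) (k i : ℤ) : (k * i) % N + Int.gcd k N ≤ N := by
  have := Int.emod_lt_of_pos (k * i) hN
  have := Int.le_of_dvd (by omega) (dvd_sub (Int.gcd_dvd_right k N) (gcd_dvd_mul_emod k N i))
  omega

lemma sub_mul_add_gcdA_emod {N : ℤ} (hN : 0 < N) (k i : ℤ) :
    ((N - k) * (i + Int.gcdA k N)) % N = N - ((k * i) % N + Int.gcd k N) := by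
  have hb : k * i ≡ (k * i) % N [ZMOD N] := (Int.mod_modEq _ _).symm
  have hr : k * Int.gcdA k N ≡ Int.gcd k N [ZMOD N] :=
    Int.modEq_iff_dvd.2 ⟨Int.gcdB k N, by rw [Int.gcd_eq_gcd_ab]; ring⟩
  have hN0 : N * (i + Int.gcdA k N) ≡ N [ZMOD N] :=
    Int.modEq_iff_dvd.2 ⟨1 - (i + Int.gcdA k N), by ring⟩
  have hcong : (N - k) * (i + Int.gcdA k N) ≡ N - ((k * i) % N + Int.gcd k N) [ZMOD N] :=
    calc (N - k) * (i + Int.gcdA k N)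
        = N * (i + Int.gcdA k N) - (k * i + k * Int.gcdA k N) := by ring
      _ ≡ N - ((k * i) % N + Int.gcd k N) [ZMOD N] := hN0.sub (hb.add hr)
  have hd : (0 : ℤ) < Int.gcd k N := Int.natCast_pos.2 (Int.gcd_pos_of_ne_zero_right k hN.ne')
  have hle := mul_emod_add_gcd_le hN k i
  have := Int.emod_nonneg (k * i) hN.ne'
  rw [hcong, Int.emod_eq_of_lt (by omega) (by omega)]

end EuclideanRhythm

/-- Up to a rotation `r`, the ascents of the Euclidean array `E(k,N)` coincide with the
descents of `E(N-k, N)`: assigning notes to ascents of `E(k,N)` yields the Euclidean rhythm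
of `E(N-k,N)` up to rotation. -/
theorem euclidean_rhythm_complement (N k : ℤ) (hk : 0 < k) (hkN : k < N) :
    ∃ r : ℤ, ∀ i : ℤ,
      ((k * (i - 1)) % N < (k * i) % N) ↔
        (((N - k) * (i + r - 1)) % N > ((N - k) * (i + r)) % N) := by
  open EuclideanRhythm in
  have hN : 0 < N := hk.trans hkN
  have hg : (0 : ℤ) < Int.gcd k N := Int.natCast_pos.2 (Int.gcd_pos_of_ne_zero_right k hN.ne')
  refine ⟨Int.gcdA k N, fun i => ?_⟩
  rw [ascent_iff hk hkN, gt_iff_lt, descent_iff (by omega) (by omega), sub_mul_add_gcdA_emod hN,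
    sub_lt_sub_iff_left, lt_add_iff_le_of_dvd hg (Int.gcd_dvd_left k N) (gcd_dvd_mul_emod k N i)]
end
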